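/- Among all trees on n ≥ 2 vertices, the star S_n is the unique tree maximizing the Randić incidence energy; that is, for any tree T on n vertices with T ≇ S_n, I_RE(T) < I_RE(S_n) = n - 2 + √2. -/

import Mathlib

open Matrix BigOperators

attribute [local instance] Classical.propDecidable

noncomputable section

/-- The Randić incidence matrix of `G`. -/
def randicIncidence {V : Type} [Fintype V] (G : SimpleGraph V) :
    Matrix V G.edgeSet ℝ :=
  fun v e => if v ∈ (e : Sym2 V) then (Real.sqrt (G.degree v))⁻¹ else 0

/-- The singular values of the Randić incidence matrix of `G`, indexed by `V`. -/
def randicSingularValues {V : Type} [Fintype V] (G : SimpleGraph V) : V → ℝ :=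
  fun i => Real.sqrt
    ((Matrix.isHermitian_mul_conjTranspose_self (randicIncidence G)).eigenvalues i)

/-- The Randić incidence energy: the sum of the singular values. -/
def randicIncidenceEnergy {V : Type} [Fintype V] (G : SimpleGraph V) : ℝ :=
  ∑ i, randicSingularValues G i

/-- The star graph on `Fin n`, with center the vertex `0`. -/
def starGraph (n : ℕ) : SimpleGraph (Fin n) where
  Adj i j := i ≠ j ∧ (i.val = 0 ∨ j.val = 0)
  symm := ⟨fun i j h => ⟨h.1.symm, h.2.symm⟩⟩
  loopless := ⟨fun i h => h.1 rfl⟩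

/-!
Let `B` be the Randić incidence matrix of a graph without isolated vertices. Then
`B Bᵀ = 1 + R` with `R = D^{-1/2} A D^{-1/2}` the Randić matrix, so the squared singular values
of `B` are the eigenvalues `μᵢ ≥ 0` of `1 + R`, and they sum to `tr (1 + R) = n`. For a tree `B`
has only `n - 1` columns, so `0` is an eigenvalue, and `R √d = √d` makes `2` an eigenvalue. The
other `n - 2` eigenvalues sum to `n - 2`, so `√μ ≤ (μ + 1) / 2` bounds the energy by
`n - 2 + √2`, with equality iff they all equal `1`. For the star `tr R² = 2` forces this, as the
squares of those eigenvalues then also sum to `n - 2`. Conversely, at equality the spectrum of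
`1 + R` lies in `{0, 1, 2}`, so `R³ = R`. Since `R` is nonnegative and supported on the edges, the
ends of every walk of length three are then adjacent, and a connected graph with this property
and a leaf is the star centred at the neighbour of that leaf.
-/

open Finset

theorem Matrix.apply_mul_apply_mul_apply_le_pow_three_apply {n R : Type*} [Fintype n]
    [CommSemiring R] [PartialOrder R] [IsOrderedRing R] {N : Matrix n n R}
    (hN : ∀ i j, 0 ≤ N i j) (u a b v : n) : N u a * N a b * N b v ≤ (N ^ 3) u v := by
  have hN2 : ∀ i j, 0 ≤ (N * N) i j := fun i j =>
    sum_nonneg fun k _ => mul_nonneg (hN i k) (hN k j)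
  rw [pow_three', Matrix.mul_apply]
  refine le_trans ?_ (single_le_sum (fun x _ => mul_nonneg (hN2 u x) (hN x v)) (mem_univ b))
  gcongr
  · exact hN b v
  · rw [Matrix.mul_apply]
    exact single_le_sum (fun x _ => mul_nonneg (hN u x) (hN x b)) (mem_univ a)

namespace Matrix.IsHermitian

variable {n 𝕜 : Type*} [Fintype n] [DecidableEq n] [RCLike 𝕜] {A : Matrix n n 𝕜}
  (hA : A.IsHermitian)
include hA

theorem exists_eigenvalues_eq_zero_of_rank_lt (hrank : A.rank < Fintype.card n) :
    ∃ i, hA.eigenvalues i = 0 := by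
  by_contra! h
  rw [hA.rank_eq_card_non_zero_eigs, Fintype.card_congr (Equiv.subtypeUnivEquiv h)] at hrank
  exact hrank.false

theorem exists_eigenvalues_eq_of_mulVec_eq_smul {x : n → 𝕜} {t : ℝ} (hx : x ≠ 0)
    (hAx : A *ᵥ x = (t : 𝕜) • x) : ∃ i, hA.eigenvalues i = t := by
  have hsp : (t : 𝕜) ∈ spectrum 𝕜 A := by
    rw [← Matrix.spectrum_toLin']
    exact Module.End.HasEigenvalue.mem_spectrum
      (Module.End.hasEigenvalue_of_hasEigenvector ⟨Module.End.mem_eigenspace_iff.mpr hAx, hx⟩)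
  rw [hA.spectrum_eq_image_range] at hsp
  obtain ⟨_, ⟨i, rfl⟩, hi⟩ := hsp
  exact ⟨i, RCLike.ofReal_injective hi⟩

theorem trace_cfc (f : ℝ → ℝ) : (cfc f A).trace = ∑ i, (f (hA.eigenvalues i) : 𝕜) := by
  rw [hA.cfc_eq, IsHermitian.cfc, Unitary.conjStarAlgAut_apply, trace_mul_cycle,
    Unitary.coe_star_mul_self, one_mul, trace_diagonal]
  rfl

theorem aeval_eq_aeval_of_eval_eigenvalues_eq {p q : Polynomial ℝ}
    (h : ∀ i, p.eval (hA.eigenvalues i) = q.eval (hA.eigenvalues i)) :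
    Polynomial.aeval A p = Polynomial.aeval A q := by
  rw [← cfc_polynomial p A hA.isSelfAdjoint, ← cfc_polynomial q A hA.isSelfAdjoint]
  refine cfc_congr ?_
  rw [hA.spectrum_real_eq_range_eigenvalues]
  rintro _ ⟨i, rfl⟩
  exact h i

end Matrix.IsHermitian

theorem Real.sqrt_le_add_one_div_two {x : ℝ} (hx : 0 ≤ x) : √x ≤ (x + 1) / 2 := by
  nlinarith [Real.sq_sqrt hx, sq_nonneg (√x - 1)]

theorem Real.eq_one_of_sqrt_eq_add_one_div_two {x : ℝ} (hx : 0 ≤ x) (h : √x = (x + 1) / 2) :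
    x = 1 := by
  nlinarith [Real.sq_sqrt hx, sq_nonneg (√x - 1)]

section SumEqCard

variable {ι : Type*} {s : Finset ι} {x : ι → ℝ}

theorem sum_add_one_div_two_eq_card (hsum : ∑ k ∈ s, x k = #s) :
    ∑ k ∈ s, (x k + 1) / 2 = #s := by
  rw [← sum_div, sum_add_distrib, hsum, sum_const, nsmul_one]
  ring

theorem sum_sqrt_le_card_of_sum_eq_card (hx : ∀ k ∈ s, 0 ≤ x k)
    (hsum : ∑ k ∈ s, x k = #s) : ∑ k ∈ s, √(x k) ≤ #s :=
  (sum_le_sum fun k hk => Real.sqrt_le_add_one_div_two (hx k hk)).trans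
    (sum_add_one_div_two_eq_card hsum).le

theorem eq_one_of_sum_sqrt_eq_card (hx : ∀ k ∈ s, 0 ≤ x k) (hsum : ∑ k ∈ s, x k = #s)
    (heq : ∑ k ∈ s, √(x k) = #s) {k : ι} (hk : k ∈ s) : x k = 1 := by
  rw [← sum_add_one_div_two_eq_card hsum,
    sum_eq_sum_iff_of_le fun k hk => Real.sqrt_le_add_one_div_two (hx k hk)] at heq
  exact Real.eq_one_of_sqrt_eq_add_one_div_two (hx k hk) (heq k hk)

theorem eq_one_of_sum_sq_eq_card (hsum : ∑ k ∈ s, x k = #s) (hsq : ∑ k ∈ s, x k ^ 2 = #s)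
    {k : ι} (hk : k ∈ s) : x k = 1 := by
  have hvar : ∑ k ∈ s, (x k - 1) ^ 2 = 0 := by
    simp only [sub_sq, mul_one, one_pow, sum_add_distrib, sum_sub_distrib, ← mul_sum, hsum, hsq,
      sum_const, nsmul_one]
    ring
  have := (sum_eq_zero_iff_of_nonneg fun k _ => sq_nonneg (x k - 1)).mp hvar k hk
  linarith [pow_eq_zero_iff (n := 2) two_ne_zero |>.mp this]

end SumEqCard

section ZeroTwoProfile

variable {ι : Type*} [Fintype ι] {μ : ι → ℝ} {i j : ι}

theorem card_compl_pair (hij : i ≠ j) : (#({i, j}ᶜ : Finset ι) : ℝ) = Fintype.card ι - 2 := by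
  have h := card_add_card_compl ({i, j} : Finset ι)
  rw [card_pair hij] at h
  rw [← h]
  push_cast
  ring

theorem sum_compl_pair_eq_card (hsum : ∑ k, μ k = Fintype.card ι) (hij : i ≠ j) (hi : μ i = 0)
    (hj : μ j = 2) : ∑ k ∈ {i, j}ᶜ, μ k = #({i, j}ᶜ : Finset ι) := by
  rw [card_compl_pair hij, ← hsum, ← sum_add_sum_compl {i, j} μ, sum_pair hij, hi, hj]
  ring

theorem sum_sqrt_le_of_sum_eq_card (hμ : ∀ k, 0 ≤ μ k) (hsum : ∑ k, μ k = Fintype.card ι)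
    (hij : i ≠ j) (hi : μ i = 0) (hj : μ j = 2) : ∑ k, √(μ k) ≤ Fintype.card ι - 2 + √2 := by
  rw [← sum_add_sum_compl {i, j}, sum_pair hij, hi, hj, Real.sqrt_zero, ← card_compl_pair hij]
  linarith [sum_sqrt_le_card_of_sum_eq_card (fun k _ => hμ k)
    (sum_compl_pair_eq_card hsum hij hi hj)]

theorem eq_zero_or_eq_one_or_eq_two_of_sum_sqrt_eq (hμ : ∀ k, 0 ≤ μ k)
    (hsum : ∑ k, μ k = Fintype.card ι) (hij : i ≠ j) (hi : μ i = 0) (hj : μ j = 2)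
    (heq : ∑ k, √(μ k) = Fintype.card ι - 2 + √2) (k : ι) : μ k = 0 ∨ μ k = 1 ∨ μ k = 2 := by
  by_cases hk : k ∈ ({i, j} : Finset ι)
  · rcases mem_insert.mp hk with rfl | hk <;> simp_all
  rw [← sum_add_sum_compl {i, j}, sum_pair hij, hi, hj, Real.sqrt_zero, ← card_compl_pair hij]
    at heq
  exact Or.inr <| Or.inl <| eq_one_of_sum_sqrt_eq_card (fun k _ => hμ k)
    (sum_compl_pair_eq_card hsum hij hi hj) (by linarith) (mem_compl.mpr hk)

theorem sum_sqrt_eq_of_sum_sq_eq (hsum : ∑ k, μ k = Fintype.card ι)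
    (hsq : ∑ k, μ k ^ 2 = Fintype.card ι + 2) (hij : i ≠ j) (hi : μ i = 0) (hj : μ j = 2) :
    ∑ k, √(μ k) = Fintype.card ι - 2 + √2 := by
  have hsq' : ∑ k ∈ {i, j}ᶜ, μ k ^ 2 = #({i, j}ᶜ : Finset ι) := by
    rw [card_compl_pair hij, ← sub_eq_iff_eq_add.mpr hsq, ← sum_add_sum_compl {i, j},
      sum_pair hij, hi, hj]
    ring
  have hone := fun k (hk : k ∈ ({i, j}ᶜ : Finset ι)) =>
    eq_one_of_sum_sq_eq_card (sum_compl_pair_eq_card hsum hij hi hj) hsq' hk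
  rw [← sum_add_sum_compl {i, j}, sum_pair hij, hi, hj, Real.sqrt_zero,
    sum_congr rfl fun k hk => by rw [hone k hk, Real.sqrt_one], sum_const, nsmul_one,
    card_compl_pair hij]
  ring

end ZeroTwoProfile

namespace SimpleGraph

section Star

variable {V : Type*}

theorem Preconnected.eq_starGraph_of_adj_of_adj_of_adj {G : SimpleGraph V} (hG : G.Preconnected)
    {a c : V} (hac : G.Adj a c) (hleaf : ∀ w, G.Adj a w → w = c)
    (H : ∀ {u x y v}, G.Adj u x → G.Adj x y → G.Adj y v → G.Adj u v) : G = starGraph c := by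
  have hcenter : ∀ w, w = c ∨ G.Adj c w := fun w => by
    obtain ⟨p⟩ := hG w a
    induction p with
    | nil => exact Or.inr hac.symm
    | cons hwx _ ih =>
      rcases ih hac hleaf with rfl | hcx
      · exact Or.inr hwx.symm
      · exact Or.inl (hleaf _ (H hac hcx hwx.symm))
  ext x y
  rw [starGraph_adj]
  refine ⟨fun hxy => ⟨hxy.ne, ?_⟩, ?_⟩
  · by_contra! hne
    exact G.irrefl (H ((hcenter x).resolve_left hne.1) hxy ((hcenter y).resolve_left hne.2).symm)
  · rintro ⟨hne, rfl | rfl⟩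
    · exact (hcenter y).resolve_left hne.symm
    · exact ((hcenter x).resolve_left hne).symm

def starGraphIso (c c' : V) : starGraph c ≃g starGraph c' where
  toEquiv := Equiv.swap c c'
  map_rel_iff' := by simp [starGraph_adj, Equiv.swap_apply_eq_iff]

end Star

variable {V : Type} [Fintype V] {G : SimpleGraph V}

theorem IsTree.degree_pos [Nontrivial V] (hG : G.IsTree) (v : V) : 0 < G.degree v :=
  hG.connected.preconnected.degree_pos_of_nontrivial v

theorem IsTree.card_edgeFinset_lt (hG : G.IsTree) : #G.edgeFinset < Fintype.card V := by
  have := hG.card_edgeFinset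
  omega

variable (G) in
def randicMatrix : Matrix V V ℝ :=
  fun u v => if G.Adj u v then (√(G.degree u))⁻¹ * (√(G.degree v))⁻¹ else 0

theorem randicMatrix_apply_self (u : V) : G.randicMatrix u u = 0 := by
  simp [randicMatrix]

theorem trace_randicMatrix : G.randicMatrix.trace = 0 := by
  simp [Matrix.trace, randicMatrix_apply_self]

theorem randicMatrix_nonneg (u v : V) : 0 ≤ G.randicMatrix u v := by
  unfold randicMatrix
  positivity

theorem randicMatrix_pos_iff {u v : V} : 0 < G.randicMatrix u v ↔ G.Adj u v := by
  refine ⟨fun h => by_contra fun hadj => by simp [randicMatrix, hadj] at h, fun hadj => ?_⟩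
  have hu : 0 < G.degree u := G.degree_pos_iff_exists_adj u |>.mpr ⟨v, hadj⟩
  have hv : 0 < G.degree v := G.degree_pos_iff_exists_adj v |>.mpr ⟨u, hadj.symm⟩
  simp only [randicMatrix, if_pos hadj]
  positivity

theorem randicMatrix_mulVec_sqrt_degree :
    G.randicMatrix *ᵥ (fun v => √(G.degree v)) = fun v => √(G.degree v) := by
  ext u
  have hneighbor : ∀ v, G.randicMatrix u v * √(G.degree v) =
      if G.Adj u v then (√(G.degree u))⁻¹ else 0 := fun v => by
    unfold randicMatrix
    split_ifs with hadj
    · have hv : (0 : ℝ) < √(G.degree v) :=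
        Real.sqrt_pos.mpr (mod_cast G.degree_pos_iff_exists_adj v |>.mpr ⟨u, hadj.symm⟩)
      field_simp
    · rw [zero_mul]
  simp only [Matrix.mulVec, dotProduct, hneighbor, sum_ite, sum_const_zero, add_zero, sum_const,
    nsmul_eq_mul]
  rw [← neighborFinset_eq_filter, card_neighborFinset_eq_degree, ← div_eq_mul_inv, Real.div_sqrt]

theorem trace_randicMatrix_sq :
    (G.randicMatrix ^ 2).trace =
      ∑ u, ∑ v ∈ G.neighborFinset u, ((G.degree u : ℝ) * G.degree v)⁻¹ := by
  simp only [Matrix.trace, Matrix.diag, sq, Matrix.mul_apply, neighborFinset_eq_filter, sum_filter]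
  refine sum_congr rfl fun u _ => sum_congr rfl fun v _ => ?_
  by_cases hadj : G.Adj u v
  · have hsq : ∀ w, (√(G.degree w : ℝ))⁻¹ * (√(G.degree w))⁻¹ = (G.degree w : ℝ)⁻¹ := fun w => by
      rw [← mul_inv, Real.mul_self_sqrt (Nat.cast_nonneg _)]
    simp only [randicMatrix, if_pos hadj, if_pos hadj.symm]
    rw [mul_inv, ← hsq u, ← hsq v]
    ring
  · simp [randicMatrix, hadj]

theorem randicMatrix_pow_three_apply_pos {u a b v : V} (hua : G.Adj u a) (hab : G.Adj a b)
    (hbv : G.Adj b v) : 0 < (G.randicMatrix ^ 3) u v :=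
  lt_of_lt_of_le
    (mul_pos (mul_pos (randicMatrix_pos_iff.mpr hua) (randicMatrix_pos_iff.mpr hab))
      (randicMatrix_pos_iff.mpr hbv))
    (Matrix.apply_mul_apply_mul_apply_le_pow_three_apply randicMatrix_nonneg u a b v)

theorem adj_of_randicMatrix_pow_three_eq_self (hR : G.randicMatrix ^ 3 = G.randicMatrix)
    {u a b v : V} (hua : G.Adj u a) (hab : G.Adj a b) (hbv : G.Adj b v) : G.Adj u v :=
  randicMatrix_pos_iff.mp (hR ▸ randicMatrix_pow_three_apply_pos hua hab hbv)

theorem randicIncidence_mul_conjTranspose_apply (u v : V) :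
    (randicIncidence G * (randicIncidence G)ᴴ) u v =
      #{e ∈ G.edgeFinset | u ∈ e ∧ v ∈ e} * ((√(G.degree u))⁻¹ * (√(G.degree v))⁻¹) := by
  calc _ = ∑ e ∈ G.edgeFinset,
        if u ∈ e ∧ v ∈ e then (√(G.degree u))⁻¹ * (√(G.degree v))⁻¹ else 0 := by
        simp only [Matrix.mul_apply, randicIncidence, Matrix.conjTranspose_apply, star_trivial,
          ite_zero_mul_ite_zero]
        symm
        exact sum_subtype _ (fun _ => G.mem_edgeFinset) _
    _ = _ := by rw [sum_ite, sum_const_zero, add_zero, sum_const, nsmul_eq_mul]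

theorem randicIncidence_mul_conjTranspose (hd : ∀ v, 0 < G.degree v) :
    randicIncidence G * (randicIncidence G)ᴴ = 1 + G.randicMatrix := by
  ext u v
  rw [randicIncidence_mul_conjTranspose_apply, Matrix.add_apply, randicMatrix]
  rcases eq_or_ne u v with rfl | huv
  · have hdu : (0 : ℝ) < G.degree u := mod_cast hd u
    rw [filter_congr fun e _ => and_self_iff, ← incidenceFinset_eq_filter,
      card_incidenceFinset_eq_degree, ← mul_inv, Real.mul_self_sqrt hdu.le, Matrix.one_apply_eq,
      if_neg G.irrefl, mul_inv_cancel₀ hdu.ne', add_zero]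
  · rw [Matrix.one_apply_ne huv, zero_add]
    simp_rw [Sym2.mem_and_mem_iff huv]
    split_ifs with hadj
    · rw [filter_eq', if_pos (mem_edgeFinset.mpr hadj)]
      simp
    · rw [filter_eq', if_neg (mt mem_edgeFinset.mp hadj)]
      simp

variable (G) in
def randicEigenvalues : V → ℝ :=
  (Matrix.isHermitian_mul_conjTranspose_self (randicIncidence G)).eigenvalues

theorem randicEigenvalues_nonneg (i : V) : 0 ≤ G.randicEigenvalues i :=
  Matrix.eigenvalues_self_mul_conjTranspose_nonneg _ i

theorem sum_randicEigenvalues_eq_trace :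
    ∑ i, G.randicEigenvalues i = (randicIncidence G * (randicIncidence G)ᴴ).trace := by
  rw [(Matrix.isHermitian_mul_conjTranspose_self _).trace_eq_sum_eigenvalues]
  rfl

theorem sum_randicEigenvalues_sq_eq_trace :
    ∑ i, G.randicEigenvalues i ^ 2 = ((randicIncidence G * (randicIncidence G)ᴴ) ^ 2).trace := by
  have hA := Matrix.isHermitian_mul_conjTranspose_self (randicIncidence G)
  rw [← cfc_pow_id (R := ℝ) _ 2 hA.isSelfAdjoint, hA.trace_cfc]
  simp [randicEigenvalues]

theorem sum_randicEigenvalues (hd : ∀ v, 0 < G.degree v) :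
    ∑ i, G.randicEigenvalues i = Fintype.card V := by
  rw [sum_randicEigenvalues_eq_trace, randicIncidence_mul_conjTranspose hd, Matrix.trace_add,
    trace_randicMatrix, Matrix.trace_one, add_zero]

theorem sum_randicEigenvalues_sq (hd : ∀ v, 0 < G.degree v) :
    ∑ i, G.randicEigenvalues i ^ 2 = Fintype.card V + (G.randicMatrix ^ 2).trace := by
  rw [sum_randicEigenvalues_sq_eq_trace, randicIncidence_mul_conjTranspose hd,
    (Commute.one_left _).add_sq, one_pow, mul_one, two_mul, Matrix.trace_add, Matrix.trace_add,
    Matrix.trace_add, trace_randicMatrix, Matrix.trace_one, add_zero, add_zero]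

theorem exists_randicEigenvalues_eq_zero (hE : #G.edgeFinset < Fintype.card V) :
    ∃ i, G.randicEigenvalues i = 0 := by
  refine Matrix.IsHermitian.exists_eigenvalues_eq_zero_of_rank_lt _ ?_
  calc _ ≤ (randicIncidence G).rank := Matrix.rank_mul_le_left _ _
    _ ≤ Fintype.card G.edgeSet := Matrix.rank_le_card_width _
    _ < Fintype.card V := G.edgeFinset_card ▸ hE

theorem exists_randicEigenvalues_eq_two [Nonempty V] (hd : ∀ v, 0 < G.degree v) :
    ∃ i, G.randicEigenvalues i = 2 := by
  refine Matrix.IsHermitian.exists_eigenvalues_eq_of_mulVec_eq_smul _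
    (x := fun v => √(G.degree v)) ?_ ?_
  · obtain ⟨v⟩ := ‹Nonempty V›
    exact Function.ne_iff.mpr ⟨v, (Real.sqrt_pos.mpr (mod_cast hd v)).ne'⟩
  · rw [randicIncidence_mul_conjTranspose hd, Matrix.add_mulVec, Matrix.one_mulVec,
      randicMatrix_mulVec_sqrt_degree]
    ext v
    simp only [Pi.add_apply, Pi.smul_apply, smul_eq_mul]
    norm_num
    ring

theorem exists_randicEigenvalues_eq_zero_eq_two (hd : ∀ v, 0 < G.degree v)
    (hE : #G.edgeFinset < Fintype.card V) :
    ∃ i j, i ≠ j ∧ G.randicEigenvalues i = 0 ∧ G.randicEigenvalues j = 2 := by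
  have : Nonempty V := Fintype.card_pos_iff.mp (Nat.zero_lt_of_lt hE)
  obtain ⟨i, hi⟩ := exists_randicEigenvalues_eq_zero hE
  obtain ⟨j, hj⟩ := exists_randicEigenvalues_eq_two hd
  exact ⟨i, j, fun h => by norm_num [h, hj] at hi, hi, hj⟩

theorem randicIncidenceEnergy_le (hd : ∀ v, 0 < G.degree v)
    (hE : #G.edgeFinset < Fintype.card V) :
    randicIncidenceEnergy G ≤ Fintype.card V - 2 + √2 := by
  obtain ⟨i, j, hij, hi, hj⟩ := exists_randicEigenvalues_eq_zero_eq_two hd hE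
  exact sum_sqrt_le_of_sum_eq_card randicEigenvalues_nonneg (sum_randicEigenvalues hd) hij hi hj

theorem randicEigenvalues_mem_of_randicIncidenceEnergy_eq (hd : ∀ v, 0 < G.degree v)
    (hE : #G.edgeFinset < Fintype.card V)
    (heq : randicIncidenceEnergy G = Fintype.card V - 2 + √2) (k : V) :
    G.randicEigenvalues k = 0 ∨ G.randicEigenvalues k = 1 ∨ G.randicEigenvalues k = 2 := by
  obtain ⟨i, j, hij, hi, hj⟩ := exists_randicEigenvalues_eq_zero_eq_two hd hE
  exact eq_zero_or_eq_one_or_eq_two_of_sum_sqrt_eq randicEigenvalues_nonneg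
    (sum_randicEigenvalues hd) hij hi hj heq k

theorem randicIncidenceEnergy_eq_of_trace_randicMatrix_sq (hd : ∀ v, 0 < G.degree v)
    (hE : #G.edgeFinset < Fintype.card V) (htr : (G.randicMatrix ^ 2).trace = 2) :
    randicIncidenceEnergy G = Fintype.card V - 2 + √2 := by
  obtain ⟨i, j, hij, hi, hj⟩ := exists_randicEigenvalues_eq_zero_eq_two hd hE
  exact sum_sqrt_eq_of_sum_sq_eq (sum_randicEigenvalues hd)
    (htr ▸ sum_randicEigenvalues_sq hd) hij hi hj

theorem randicMatrix_pow_three_eq_self (hd : ∀ v, 0 < G.degree v)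
    (hμ : ∀ i, G.randicEigenvalues i = 0 ∨ G.randicEigenvalues i = 1 ∨ G.randicEigenvalues i = 2) :
    G.randicMatrix ^ 3 = G.randicMatrix := by
  have h := (Matrix.isHermitian_mul_conjTranspose_self (randicIncidence G))
    |>.aeval_eq_aeval_of_eval_eigenvalues_eq (p := (Polynomial.X - 1) ^ 3)
      (q := Polynomial.X - 1) fun i => by
      simp only [Polynomial.eval_pow, Polynomial.eval_sub, Polynomial.eval_X, Polynomial.eval_one]
      change (G.randicEigenvalues i - 1) ^ 3 = G.randicEigenvalues i - 1
      rcases hμ i with h | h | h <;> rw [h] <;> norm_num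
  rw [randicIncidence_mul_conjTranspose hd] at h
  simpa using h

theorem trace_randicMatrix_sq_starGraph (c : V) (hV : 2 ≤ Fintype.card V) :
    ((starGraph c).randicMatrix ^ 2).trace = 2 := by
  have hprod : ∀ u, ∀ v ∈ (starGraph c).neighborFinset u,
      (((starGraph c).degree u : ℝ) * (starGraph c).degree v)⁻¹ = (Fintype.card V - 1 : ℝ)⁻¹ := by
    intro u v huv
    rw [mem_neighborFinset, starGraph_adj] at huv
    obtain ⟨hne, rfl | rfl⟩ := huv
    · rw [degree_starGraph_center, degree_starGraph_of_ne_center hne.symm]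
      push_cast [Nat.cast_sub (by omega : 1 ≤ Fintype.card V)]
      ring
    · rw [degree_starGraph_center, degree_starGraph_of_ne_center hne]
      push_cast [Nat.cast_sub (by omega : 1 ≤ Fintype.card V)]
      ring
  have hE : (#(starGraph c).edgeFinset : ℝ) = Fintype.card V - 1 := by
    rw [← (isTree_starGraph c).card_edgeFinset]
    push_cast
    ring
  have hV' : (Fintype.card V - 1 : ℝ) ≠ 0 := by
    have : (2 : ℝ) ≤ Fintype.card V := mod_cast hV
    linarith
  have hsum : ∑ u, ∑ v ∈ (starGraph c).neighborFinset u,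
      (((starGraph c).degree u : ℝ) * (starGraph c).degree v)⁻¹ = 2 := by
    rw [sum_congr rfl fun u (_ : u ∈ univ) => sum_congr rfl (hprod u)]
    simp only [sum_const, card_neighborFinset_eq_degree, nsmul_eq_mul, ← sum_mul]
    rw [← Nat.cast_sum, sum_degrees_eq_twice_card_edges, Nat.cast_mul, Nat.cast_two, hE]
    field_simp
  -- `starGraph` carries its own `DecidableRel` instance, so the neighbour sets in `hsum` and in
  -- `trace_randicMatrix_sq` have different (subsingleton) `Fintype` instances.
  rw [trace_randicMatrix_sq]
  convert hsum

theorem randicIncidenceEnergy_starGraph (c : V) (hV : 2 ≤ Fintype.card V) :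
    randicIncidenceEnergy (starGraph c) = Fintype.card V - 2 + √2 := by
  have : Nontrivial V := Fintype.one_lt_card_iff_nontrivial.mp hV
  exact randicIncidenceEnergy_eq_of_trace_randicMatrix_sq (isTree_starGraph c).degree_pos
    (isTree_starGraph c).card_edgeFinset_lt (trace_randicMatrix_sq_starGraph c hV)

end SimpleGraph

theorem starGraph_eq_starGraph {n : ℕ} (hn : 0 < n) :
    starGraph n = SimpleGraph.starGraph ⟨0, hn⟩ := by
  ext i j
  simp [starGraph, SimpleGraph.starGraph_adj, Fin.ext_iff]

theorem star_unique_max_randicIncidenceEnergy {n : ℕ} (hn : 2 ≤ n)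
    (T : SimpleGraph (Fin n)) (hT : T.IsTree)
    (hnotstar : ¬ Nonempty (T ≃g starGraph n)) :
    randicIncidenceEnergy T < randicIncidenceEnergy (starGraph n) ∧
      randicIncidenceEnergy (starGraph n) = (n : ℝ) - 2 + Real.sqrt 2 := by
  have : Nontrivial (Fin n) := Fin.nontrivial_iff_two_le.mpr hn
  have hd := hT.degree_pos
  have hE := hT.card_edgeFinset_lt
  have hstar : randicIncidenceEnergy (starGraph n) = n - 2 + √2 := by
    simpa [starGraph_eq_starGraph (by omega : 0 < n)] using
      SimpleGraph.randicIncidenceEnergy_starGraph (V := Fin n) ⟨0, by omega⟩ (by simpa using hn)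
  refine ⟨hstar ▸ lt_of_le_of_ne (by simpa using SimpleGraph.randicIncidenceEnergy_le hd hE)
    fun heq => ?_, hstar⟩
  obtain ⟨a, hdeg⟩ := hT.exists_vert_degree_one_of_nontrivial
  obtain ⟨c, hac, hleaf⟩ := SimpleGraph.degree_eq_one_iff_existsUnique_adj.mp hdeg
  have hR := SimpleGraph.randicMatrix_pow_three_eq_self hd
    (SimpleGraph.randicEigenvalues_mem_of_randicIncidenceEnergy_eq hd hE (by simpa using heq))
  have hTstar := hT.connected.preconnected.eq_starGraph_of_adj_of_adj_of_adj hac hleaf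
    (SimpleGraph.adj_of_randicMatrix_pow_three_eq_self hR)
  rw [hTstar, starGraph_eq_starGraph (by omega : 0 < n)] at hnotstar
  exact hnotstar ⟨SimpleGraph.starGraphIso c _⟩
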